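/- For every μ₂ > 0 and μ₁ ∈ ℝ, the function U(t₁,t₂) = log(2μ₂ / ((t₁-μ₁)² + (t₂+μ₂)²)) is harmonic on the open upper half-plane and satisfies -∂U/∂t₂(t₁,0) = e^{U(t₁,0)} for all t₁ ∈ ℝ. -/

import Mathlib

/-!
Along each coordinate line `U` has the form `s ↦ log (C / ((s - a)² + b))`, whose second derivative
is `2((s - a)² - b) / ((s - a)² + b)²`. With `X = t₁ - μ₁` and `Y = t₂ + μ₂` the two second partials
are `2(X² - Y²)/(X² + Y²)²` and `2(Y² - X²)/(X² + Y²)²`, which cancel. On the boundary,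
`-∂U/∂t₂ = 2μ₂/(X² + μ₂²)`, which is exactly the argument of the logarithm in `U(t₁, 0)`.
-/

open Real Topology

theorem HasDerivAt.log_const_div {f : ℝ → ℝ} {f' x C : ℝ} (hf : HasDerivAt f f' x)
    (hC : C ≠ 0) (hx : f x ≠ 0) :
    HasDerivAt (fun s => Real.log (C / f s)) (-f' / f x) x := by
  convert ((hasDerivAt_const x C).fun_div hf hx).log (div_ne_zero hC hx) using 1
  field_simp
  ring

section LogConstDivSqAdd

variable {C a b x : ℝ}

theorem hasDerivAt_sq_sub_add (x : ℝ) : HasDerivAt (fun s => (s - a) ^ 2 + b) (2 * (x - a)) x := by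
  simpa using (((hasDerivAt_id x).sub_const a).pow 2).add_const b

theorem hasDerivAt_log_const_div_sq_add (hC : C ≠ 0) (hx : (x - a) ^ 2 + b ≠ 0) :
    HasDerivAt (fun s => log (C / ((s - a) ^ 2 + b))) (-(2 * (x - a)) / ((x - a) ^ 2 + b)) x :=
  HasDerivAt.log_const_div (hasDerivAt_sq_sub_add x) hC hx

theorem deriv_deriv_log_const_div_sq_add (hC : C ≠ 0) (hx : (x - a) ^ 2 + b ≠ 0) :
    deriv (fun s => deriv (fun s' => log (C / ((s' - a) ^ 2 + b))) s) x
      = 2 * ((x - a) ^ 2 - b) / ((x - a) ^ 2 + b) ^ 2 := by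
  have hnear : ∀ᶠ s in 𝓝 x, (s - a) ^ 2 + b ≠ 0 :=
    (by fun_prop : Continuous fun s : ℝ => (s - a) ^ 2 + b).continuousAt.eventually_ne hx
  have hderiv : (fun s => deriv (fun s' => log (C / ((s' - a) ^ 2 + b))) s)
      =ᶠ[𝓝 x] fun s => -(2 * (s - a)) / ((s - a) ^ 2 + b) := by
    filter_upwards [hnear] with s hs
    exact (hasDerivAt_log_const_div_sq_add hC hs).deriv
  have hnum : HasDerivAt (fun s => -(2 * (s - a))) (-(2 * 1)) x :=
    (((hasDerivAt_id x).sub_const a).const_mul 2).neg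
  rw [hderiv.deriv_eq, (hnum.fun_div (hasDerivAt_sq_sub_add x) hx).deriv]
  ring

end LogConstDivSqAdd

/-- For every `μ₂ > 0` and `μ₁ ∈ ℝ`, the function
`U(t₁,t₂) = log(2μ₂/((t₁-μ₁)² + (t₂+μ₂)²))` is harmonic on the open upper
half-plane and satisfies `-∂U/∂t₂(t₁,0) = e^{U(t₁,0)}` for all `t₁ ∈ ℝ`. -/
theorem general_bubble_harmonic_and_boundary
    (μ₁ μ₂ : ℝ) (hμ₂ : 0 < μ₂)
    (U : ℝ → ℝ → ℝ)
    (hU : ∀ t₁ t₂ : ℝ,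
      U t₁ t₂ = Real.log (2 * μ₂ / ((t₁ - μ₁) ^ 2 + (t₂ + μ₂) ^ 2))) :
    (∀ t₁ t₂ : ℝ, 0 < t₂ →
      deriv (fun s => deriv (fun s' => U s' t₂) s) t₁ +
        deriv (fun s => deriv (fun s' => U t₁ s') s) t₂ = 0) ∧
    (∀ t₁ : ℝ, -deriv (fun s => U t₁ s) 0 = Real.exp (U t₁ 0)) := by
  have hC : 2 * μ₂ ≠ 0 := by positivity
  have hU₂ : ∀ t₁, (fun s => U t₁ s)
      = fun s => log (2 * μ₂ / ((s - -μ₂) ^ 2 + (t₁ - μ₁) ^ 2)) := fun t₁ => by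
    funext s
    rw [hU, sub_neg_eq_add, add_comm]
  refine ⟨fun t₁ t₂ ht₂ => ?_, fun t₁ => ?_⟩
  · have hpos : 0 < (t₁ - μ₁) ^ 2 + (t₂ + μ₂) ^ 2 := by positivity
    have hU₁ : (fun s => U s t₂) = fun s => log (2 * μ₂ / ((s - μ₁) ^ 2 + (t₂ + μ₂) ^ 2)) :=
      funext fun s => hU s t₂
    rw [hU₁, hU₂, deriv_deriv_log_const_div_sq_add hC hpos.ne',
      deriv_deriv_log_const_div_sq_add hC (by rw [sub_neg_eq_add, add_comm]; exact hpos.ne'),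
      sub_neg_eq_add, add_comm ((t₂ + μ₂) ^ 2)]
    ring
  · have hpos : 0 < (t₁ - μ₁) ^ 2 + (0 + μ₂) ^ 2 := by positivity
    have hne : (0 - -μ₂) ^ 2 + (t₁ - μ₁) ^ 2 ≠ 0 := by
      rw [sub_neg_eq_add, add_comm]; exact hpos.ne'
    rw [hU₂, (hasDerivAt_log_const_div_sq_add hC hne).deriv, hU, exp_log (by positivity), sub_neg_eq_add, add_comm ((0 + μ₂) ^ 2)]
    ring
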